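/- arXiv:1603.09157 — 3 statements merged into one kernel-verified Lean document; each statement's English description precedes it below -/
import Mathlib

section
/- Let T ≥ 1 and let n_x, n_u, n_w, n_y ≥ 1. Let E, F, H, P be real n_x×n_x matrices with P symmetric positive definite, K a real n_x×n_u matrix, L a real n_x×n_w matrix, C a real n_y×n_x matrix, D a real n_y×n_u matrix, and Σ_v a real symmetric positive definite n_y×n_y matrix. Suppose the block matrix M = [[HᵀE + EᵀH − P, FᵀH, Cᵀ], [HᵀF, P, 0], [C, 0, Σ_v]] is positive definite. Then for arbitrary sequences u : {1,…,T} → ℝ^{n_u}, y : {1,…,T} → ℝ^{n_y}, w : {1,…,T} → ℝ^{n_w}, initial state x̃₁ ∈ ℝ^{n_x} and offsets h : {1,…,T} → ℝ^{n_x}, the function J_λ : (ℝ^{n_x})^T → ℝ given by J_λ(x_{1:T}) = Σ_{t=1}^{T} (y_t − C x_t − D u_t)ᵀ Σ_v⁻¹ (y_t − C x_t − D u_t) − 2 (H x₁ + h₁)ᵀ (E x₁ − E x̃₁) − Σ_{t=2}^{T} 2 (H x_t + h_t)ᵀ (E x_t − F x_{t−1} − K u_{t−1} − L w_{t−1}) is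 bounded above, i.e. sup over x_{1:T} ∈ (ℝ^{n_x})^T of J_λ(x_{1:T}) is finite. -/
/-!
Padding the states with `x₀ = 0`, the relaxed cost is a quadratic function of the state
sequence `v = x_{1:T}`: along every ray, `J(s v) = J(0) + s ℓ(v) - s² Q(v)`. Telescoping the
terms `xₜᵀ P xₜ` shows `Q(v) = Σ_{t=1}^{T} S(x_{t-1}, x_t) + S(x_T, 0)`, where `S(a, b)` is the
quadratic form of `M` at `(a, -b, -Σ_v⁻¹ C a)`. Since `M > 0`, every term is nonnegative and the
term with `x_t ≠ 0` is positive, so `Q` is positive definite. A continuous quadratic part that is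
positive on the unit sphere is at least some `ε > 0` there; with `m` the maximum of `ℓ` on the
sphere, `J(r u) ≤ J(0) + r m - r² ε ≤ J(0) + m² / (4ε)` for `r ≥ 0` and `‖u‖ = 1`.
-/

open Matrix Finset

theorem bddAbove_range_of_quadratic_along_rays {V : Type*} [NormedAddCommGroup V]
    [NormedSpace ℝ V] [FiniteDimensional ℝ V] {f ℓ Q : V → ℝ} (hℓ : Continuous ℓ)
    (hQ : Continuous Q) (hQ_pos : ∀ v ≠ 0, 0 < Q v)
    (hf : ∀ (s : ℝ) (v : V), f (s • v) = f 0 + s * ℓ v - s ^ 2 * Q v) :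
    BddAbove (Set.range f) := by
  rcases subsingleton_or_nontrivial V with hV | hV
  · exact ⟨f 0, by rintro _ ⟨v, rfl⟩; rw [Subsingleton.elim v 0]⟩
  have hS : IsCompact (Metric.sphere (0 : V) 1) := isCompact_sphere 0 1
  have hS_ne : (Metric.sphere (0 : V) 1).Nonempty := NormedSpace.sphere_nonempty.2 zero_le_one
  obtain ⟨u₀, hu₀, hQ_min⟩ := hS.exists_isMinOn hS_ne hQ.continuousOn
  obtain ⟨u₁, -, hℓ_max⟩ := hS.exists_isMaxOn hS_ne hℓ.continuousOn
  have hε : 0 < Q u₀ := hQ_pos u₀ (ne_zero_of_mem_sphere one_ne_zero ⟨u₀, hu₀⟩)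
  refine ⟨f 0 + ℓ u₁ ^ 2 / (4 * Q u₀), ?_⟩
  rintro _ ⟨v, rfl⟩
  obtain ⟨r, u, hu, hr, rfl⟩ : ∃ r : ℝ, ∃ u ∈ Metric.sphere (0 : V) 1, 0 ≤ r ∧ r • u = v := by
    rcases eq_or_ne v 0 with rfl | hv
    · exact ⟨0, u₀, hu₀, le_rfl, zero_smul ℝ u₀⟩
    · refine ⟨‖v‖, ‖v‖⁻¹ • v, ?_, norm_nonneg v, smul_inv_smul₀ (norm_ne_zero_iff.2 hv) v⟩
      simp [norm_smul, hv]
  have hℓu : r * ℓ u ≤ r * ℓ u₁ := mul_le_mul_of_nonneg_left (hℓ_max hu) hr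
  have hQu : r ^ 2 * Q u₀ ≤ r ^ 2 * Q u := mul_le_mul_of_nonneg_left (hQ_min hu) (sq_nonneg r)
  have hAMGM : r * ℓ u₁ - r ^ 2 * Q u₀ ≤ ℓ u₁ ^ 2 / (4 * Q u₀) := by
    rw [le_div_iff₀ (by positivity)]
    nlinarith [sq_nonneg (2 * Q u₀ * r - ℓ u₁)]
  rw [hf]
  linarith

noncomputable section Lmi

variable {ιx ιy : Type*} [Fintype ιx] [Fintype ιy] [DecidableEq ιy]

def lmiMatrix (E F H P : Matrix ιx ιx ℝ) (C : Matrix ιy ιx ℝ) (Sv : Matrix ιy ιy ℝ) :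
    Matrix ((ιx ⊕ ιx) ⊕ ιy) ((ιx ⊕ ιx) ⊕ ιy) ℝ :=
  fromBlocks (fromBlocks (Hᵀ * E + Eᵀ * H - P) (Fᵀ * H) (Hᵀ * F) P) (fromRows Cᵀ 0)
    (fromCols C 0) Sv

/-- The Schur complement of `Sv` in `lmiMatrix`, evaluated at `(a, -b)`. -/
def schurForm (E F H P : Matrix ιx ιx ℝ) (C : Matrix ιy ιx ℝ) (Sv : Matrix ιy ιy ℝ)
    (a b : ιx → ℝ) : ℝ :=
  2 * ((H *ᵥ a) ⬝ᵥ (E *ᵥ a)) - a ⬝ᵥ (P *ᵥ a) - (C *ᵥ a) ⬝ᵥ (Sv⁻¹ *ᵥ (C *ᵥ a))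
    - 2 * ((H *ᵥ b) ⬝ᵥ (F *ᵥ a)) + b ⬝ᵥ (P *ᵥ b)

variable {E F H P : Matrix ιx ιx ℝ} {C : Matrix ιy ιx ℝ} {Sv : Matrix ιy ιy ℝ}

theorem lmiMatrix_quadForm (hSv : IsUnit Sv.det) (a b : ιx → ℝ) :
    Sum.elim (Sum.elim a (-b)) (-(Sv⁻¹ *ᵥ (C *ᵥ a))) ⬝ᵥ
        (lmiMatrix E F H P C Sv *ᵥ Sum.elim (Sum.elim a (-b)) (-(Sv⁻¹ *ᵥ (C *ᵥ a))))
      = schurForm E F H P C Sv a b := by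
  have hSv_inv : Sv *ᵥ (Sv⁻¹ *ᵥ (C *ᵥ a)) = C *ᵥ a := by
    rw [mulVec_mulVec, mul_nonsing_inv _ hSv, one_mulVec]
  simp only [lmiMatrix, schurForm, fromBlocks_mulVec, fromRows_mulVec, fromCols_mulVec_sumElim,
    sumElim_dotProduct_sumElim, Sum.elim_comp_inl, Sum.elim_comp_inr, add_mulVec, sub_mulVec,
    ← mulVec_mulVec, zero_mulVec, mulVec_neg, hSv_inv, dotProduct_add,
    dotProduct_sub, dotProduct_neg, neg_dotProduct, dotProduct_zero, add_zero,
    dotProduct_mulVec _ Hᵀ, dotProduct_mulVec _ Eᵀ, dotProduct_mulVec _ Fᵀ, dotProduct_mulVec _ Cᵀ,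
    vecMul_transpose]
  rw [dotProduct_comm (E *ᵥ a), dotProduct_comm (F *ᵥ a)]
  ring

theorem schurForm_nonneg (hSv : IsUnit Sv.det) (hM : (lmiMatrix E F H P C Sv).PosDef)
    (a b : ιx → ℝ) : 0 ≤ schurForm E F H P C Sv a b := by
  have := hM.posSemidef.dotProduct_mulVec_nonneg
    (Sum.elim (Sum.elim a (-b)) (-(Sv⁻¹ *ᵥ (C *ᵥ a))))
  rwa [star_trivial, lmiMatrix_quadForm hSv] at this

theorem schurForm_pos (hSv : IsUnit Sv.det) (hM : (lmiMatrix E F H P C Sv).PosDef)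
    (a : ιx → ℝ) {b : ιx → ℝ} (hb : b ≠ 0) : 0 < schurForm E F H P C Sv a b := by
  have hz : Sum.elim (Sum.elim a (-b)) (-(Sv⁻¹ *ᵥ (C *ᵥ a))) ≠ 0 := fun hz =>
    hb (neg_eq_zero.1 (funext fun i => congrFun hz (.inl (.inr i))))
  have := hM.dotProduct_mulVec_pos hz
  rwa [star_trivial, lmiMatrix_quadForm hSv] at this

end Lmi

noncomputable section ExtendByZero

variable {ιx : Type*} (T : ℕ)

/-- States are indexed from `1`, so `x₀ = 0` is padding. -/
def extendByZero : (Fin T → ιx → ℝ) →ₗ[ℝ] ℕ → ιx → ℝ :=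
  LinearMap.pi fun t =>
    if ht : 1 ≤ t ∧ t ≤ T then LinearMap.proj (φ := fun _ => ιx → ℝ) ⟨t - 1, by omega⟩ else 0

variable {T}

theorem extendByZero_apply_of_mem (v : Fin T → ιx → ℝ) {t : ℕ} (ht : t ∈ Icc 1 T) :
    extendByZero T v t = v ⟨t - 1, by grind⟩ := by
  rw [mem_Icc] at ht
  simp [extendByZero, ht]

theorem extendByZero_apply_zero (v : Fin T → ιx → ℝ) : extendByZero T v 0 = 0 := by
  simp [extendByZero]

theorem exists_extendByZero_ne_zero {v : Fin T → ιx → ℝ} (hv : v ≠ 0) :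
    ∃ t ∈ Icc 1 T, extendByZero T v t ≠ 0 := by
  obtain ⟨i, hi⟩ := Function.ne_iff.1 hv
  exact ⟨i + 1, mem_Icc.2 ⟨by omega, i.isLt⟩, by simpa [extendByZero_apply_of_mem] using hi⟩

theorem extendByZero_restrict (x : ℕ → ιx → ℝ) {t : ℕ} (ht : t ∈ Icc 1 T) :
    extendByZero T (fun i => x (i + 1)) t = x t := by
  rw [extendByZero_apply_of_mem _ ht]
  congr
  grind

end ExtendByZero

noncomputable section RelaxedCost

variable {ιx ιu ιw ιy : Type*} [Fintype ιx] [Fintype ιu] [Fintype ιw] [Fintype ιy]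
  [DecidableEq ιy]
variable (T : ℕ) (E F H : Matrix ιx ιx ℝ) (K : Matrix ιx ιu ℝ) (L : Matrix ιx ιw ℝ)
  (C : Matrix ιy ιx ℝ) (D : Matrix ιy ιu ℝ) (Sv : Matrix ιy ιy ℝ)
  (u : ℕ → ιu → ℝ) (y : ℕ → ιy → ℝ) (w : ℕ → ιw → ℝ) (x1tilde : ιx → ℝ) (h : ℕ → ιx → ℝ)

def relaxedCost (x : ℕ → ιx → ℝ) : ℝ :=
  (∑ t ∈ Icc 1 T,
      (y t - C *ᵥ x t - D *ᵥ u t) ⬝ᵥ (Sv⁻¹ *ᵥ (y t - C *ᵥ x t - D *ᵥ u t)))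
    - 2 * ((H *ᵥ x 1 + h 1) ⬝ᵥ (E *ᵥ x 1 - E *ᵥ x1tilde))
    - ∑ t ∈ Icc 2 T,
      2 * ((H *ᵥ x t + h t) ⬝ᵥ
        (E *ᵥ x t - F *ᵥ x (t - 1) - K *ᵥ u (t - 1) - L *ᵥ w (t - 1)))

/-- Minus the quadratic part of `relaxedCost`. -/
def relaxedCostQuad (x : ℕ → ιx → ℝ) : ℝ :=
  2 * ((H *ᵥ x 1) ⬝ᵥ (E *ᵥ x 1))
    - (∑ t ∈ Icc 1 T, (C *ᵥ x t) ⬝ᵥ (Sv⁻¹ *ᵥ (C *ᵥ x t)))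
    + ∑ t ∈ Icc 2 T, 2 * ((H *ᵥ x t) ⬝ᵥ (E *ᵥ x t - F *ᵥ x (t - 1)))

variable {T E F H K L C D Sv u y w x1tilde h}

theorem relaxedCost_smul (s : ℝ) (x : ℕ → ιx → ℝ) :
    relaxedCost T E F H K L C D Sv u y w x1tilde h (s • x)
      = relaxedCost T E F H K L C D Sv u y w x1tilde h 0
        + s * (relaxedCost T E F H K L C D Sv u y w x1tilde h x
          - relaxedCost T E F H K L C D Sv u y w x1tilde h 0 + relaxedCostQuad T E F H C Sv x)
        - s ^ 2 * relaxedCostQuad T E F H C Sv x := by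
  simp only [relaxedCost, relaxedCostQuad, Pi.smul_apply, Pi.zero_apply, mulVec_smul, mulVec_zero,
    mulVec_sub, dotProduct_sub, sub_dotProduct, add_dotProduct, dotProduct_smul, smul_dotProduct,
    dotProduct_zero, zero_dotProduct, smul_eq_mul, sum_add_distrib, sum_sub_distrib, ← mul_sum,
    sum_const_zero]
  ring

theorem continuous_relaxedCost : Continuous (relaxedCost T E F H K L C D Sv u y w x1tilde h) := by
  unfold relaxedCost
  fun_prop

theorem continuous_relaxedCostQuad : Continuous (relaxedCostQuad T E F H C Sv) := by
  unfold relaxedCostQuad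
  fun_prop

theorem relaxedCostQuad_eq_sum_schurForm (P : Matrix ιx ιx ℝ) {x : ℕ → ιx → ℝ} (hx0 : x 0 = 0)
    (hT : 1 ≤ T) :
    relaxedCostQuad T E F H C Sv x
      = ∑ t ∈ Icc 1 T, schurForm E F H P C Sv (x (t - 1)) (x t)
        + schurForm E F H P C Sv (x T) 0 := by
  induction T, hT using Nat.le_induction with
  | base =>
    simp only [relaxedCostQuad, schurForm, Icc_self, sum_singleton, Icc_eq_empty_of_lt one_lt_two,
      sum_empty, hx0, mulVec_zero, dotProduct_zero, zero_dotProduct]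
    ring
  | succ T hT ih =>
    rw [relaxedCostQuad] at ih ⊢
    rw [sum_Icc_succ_top (by omega), sum_Icc_succ_top (by omega), sum_Icc_succ_top (by omega)]
    simp only [schurForm, mulVec_zero, zero_dotProduct, dotProduct_sub, Nat.add_sub_cancel] at ih ⊢
    linarith

theorem relaxedCostQuad_pos {P : Matrix ιx ιx ℝ} (hSv : IsUnit Sv.det)
    (hM : (lmiMatrix E F H P C Sv).PosDef) (hT : 1 ≤ T) {x : ℕ → ιx → ℝ} (hx0 : x 0 = 0)
    {t : ℕ} (ht : t ∈ Icc 1 T) (hxt : x t ≠ 0) : 0 < relaxedCostQuad T E F H C Sv x := by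
  rw [relaxedCostQuad_eq_sum_schurForm P hx0 hT]
  exact add_pos_of_pos_of_nonneg
    (sum_pos' (fun _ _ => schurForm_nonneg hSv hM _ _) ⟨t, ht, schurForm_pos hSv hM _ hxt⟩)
    (schurForm_nonneg hSv hM _ _)

theorem relaxedCost_congr (hT : 1 ≤ T) {x x' : ℕ → ιx → ℝ}
    (hxx' : ∀ t ∈ Icc 1 T, x t = x' t) :
    relaxedCost T E F H K L C D Sv u y w x1tilde h x
      = relaxedCost T E F H K L C D Sv u y w x1tilde h x' := by
  unfold relaxedCost
  rw [hxx' 1 (mem_Icc.2 ⟨le_rfl, hT⟩)]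
  congr 1
  · congr 1
    exact sum_congr rfl fun t ht => by rw [hxx' t ht]
  · refine sum_congr rfl fun t ht => ?_
    rw [mem_Icc] at ht
    rw [hxx' t (mem_Icc.2 ⟨by omega, ht.2⟩), hxx' (t - 1) (mem_Icc.2 ⟨by omega, by omega⟩)]

theorem range_relaxedCost_eq (hT : 1 ≤ T) :
    Set.range (relaxedCost T E F H K L C D Sv u y w x1tilde h)
      = Set.range (relaxedCost T E F H K L C D Sv u y w x1tilde h ∘ extendByZero T) := by
  refine subset_antisymm ?_ (Set.range_comp_subset_range _ _)
  rintro _ ⟨x, rfl⟩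
  exact ⟨fun i => x (i + 1), relaxedCost_congr hT fun t ht => extendByZero_restrict x ht⟩

end RelaxedCost

theorem lagrangian_relaxation_bounded_above_general
    {T nx nu nw ny : ℕ} (hT : 1 ≤ T)
    (E F H P : Matrix (Fin nx) (Fin nx) ℝ)
    (K : Matrix (Fin nx) (Fin nu) ℝ) (L : Matrix (Fin nx) (Fin nw) ℝ)
    (C : Matrix (Fin ny) (Fin nx) ℝ) (D : Matrix (Fin ny) (Fin nu) ℝ)
    (Sv : Matrix (Fin ny) (Fin ny) ℝ) (hSv : Sv.PosDef)
    (hM : (Matrix.fromBlocks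
        (Matrix.fromBlocks (Hᵀ * E + Eᵀ * H - P) (Fᵀ * H) (Hᵀ * F) P)
        (Matrix.fromRows Cᵀ 0)
        (Matrix.fromCols C 0)
        Sv).PosDef)
    (u : ℕ → (Fin nu → ℝ)) (y : ℕ → (Fin ny → ℝ)) (w : ℕ → (Fin nw → ℝ))
    (x1tilde : Fin nx → ℝ) (h : ℕ → (Fin nx → ℝ)) :
    BddAbove (Set.range (fun x : ℕ → (Fin nx → ℝ) =>
      (∑ t ∈ Finset.Icc 1 T,
        (y t - C *ᵥ x t - D *ᵥ u t) ⬝ᵥ (Sv⁻¹ *ᵥ (y t - C *ᵥ x t - D *ᵥ u t)))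
      - 2 * ((H *ᵥ x 1 + h 1) ⬝ᵥ (E *ᵥ x 1 - E *ᵥ x1tilde))
      - ∑ t ∈ Finset.Icc 2 T,
          2 * ((H *ᵥ x t + h t) ⬝ᵥ
            (E *ᵥ x t - F *ᵥ x (t - 1) - K *ᵥ u (t - 1) - L *ᵥ w (t - 1))))) := by
  set J := relaxedCost T E F H K L C D Sv u y w x1tilde h
  set Q := relaxedCostQuad T E F H C Sv
  change BddAbove (Set.range J)
  have hJ : Continuous J := continuous_relaxedCost
  have hQ : Continuous Q := continuous_relaxedCostQuad
  have hext : Continuous (extendByZero T : (Fin T → Fin nx → ℝ) → ℕ → Fin nx → ℝ) :=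
    LinearMap.continuous_of_finiteDimensional _
  rw [range_relaxedCost_eq hT]
  refine bddAbove_range_of_quadratic_along_rays
    (ℓ := fun v => J (extendByZero T v) - J 0 + Q (extendByZero T v))
    (Q := fun v => Q (extendByZero T v)) (by fun_prop) (by fun_prop) (fun v hv => ?_)
    (fun s v => ?_)
  · obtain ⟨t, ht, hvt⟩ := exists_extendByZero_ne_zero hv
    exact relaxedCostQuad_pos hSv.det_pos.ne'.isUnit hM hT (extendByZero_apply_zero v) ht hvt
  · simpa only [Function.comp, map_smul, map_zero] using relaxedCost_smul s (extendByZero T v)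

/-- Finiteness of the Lagrangian relaxation of simulation error: if the stability LMI
`M = [[HᵀE + EᵀH − P, FᵀH, Cᵀ], [HᵀF, P, 0], [C, 0, Σ_v]] > 0` holds, then for
arbitrary inputs `u`, outputs `y`, disturbances `w`, initial state `x̃₁` and multiplier
offsets `h`, the relaxed cost
`J_λ(x_{1:T}) = Σ_{t=1}^T |y_t − Cx_t − Du_t|²_{Σ_v⁻¹}
  − 2(Hx₁ + h₁)ᵀ(Ex₁ − Ex̃₁)
  − Σ_{t=2}^T 2(Hx_t + h_t)ᵀ(Ex_t − Fx_{t−1} − Ku_{t−1} − Lw_{t−1})`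
is bounded above over all state sequences `x_{1:T}`. -/
theorem lagrangian_relaxation_bounded_above
    {T nx nu nw ny : ℕ} (hT : 1 ≤ T) (hnx : 1 ≤ nx) (hnu : 1 ≤ nu)
    (hnw : 1 ≤ nw) (hny : 1 ≤ ny)
    (E F H P : Matrix (Fin nx) (Fin nx) ℝ) (hP : P.PosDef)
    (K : Matrix (Fin nx) (Fin nu) ℝ) (L : Matrix (Fin nx) (Fin nw) ℝ)
    (C : Matrix (Fin ny) (Fin nx) ℝ) (D : Matrix (Fin ny) (Fin nu) ℝ)
    (Sv : Matrix (Fin ny) (Fin ny) ℝ) (hSv : Sv.PosDef)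
    (hM : (Matrix.fromBlocks
        (Matrix.fromBlocks (Hᵀ * E + Eᵀ * H - P) (Fᵀ * H) (Hᵀ * F) P)
        (Matrix.fromRows Cᵀ 0)
        (Matrix.fromCols C 0)
        Sv).PosDef)
    (u : ℕ → (Fin nu → ℝ)) (y : ℕ → (Fin ny → ℝ)) (w : ℕ → (Fin nw → ℝ))
    (x1tilde : Fin nx → ℝ) (h : ℕ → (Fin nx → ℝ)) :
    BddAbove (Set.range (fun x : ℕ → (Fin nx → ℝ) =>
      (∑ t ∈ Finset.Icc 1 T,
        (y t - C *ᵥ x t - D *ᵥ u t) ⬝ᵥ (Sv⁻¹ *ᵥ (y t - C *ᵥ x t - D *ᵥ u t)))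
      - 2 * ((H *ᵥ x 1 + h 1) ⬝ᵥ (E *ᵥ x 1 - E *ᵥ x1tilde))
      - ∑ t ∈ Finset.Icc 2 T,
          2 * ((H *ᵥ x t + h t) ⬝ᵥ
            (E *ᵥ x t - F *ᵥ x (t - 1) - K *ᵥ u (t - 1) - L *ᵥ w (t - 1))))) :=
  lagrangian_relaxation_bounded_above_general hT E F H P K L C D Sv hSv hM u y w x1tilde h
end

section
/- Let N, M ≥ 1. Let F̄ be an invertible real N×N matrix, C̄ a real M×N matrix, S a real symmetric positive definite M×M matrix, Λ a real N×N matrix, ε ∈ ℝ^N and b ∈ ℝ^M. Define Ψ = C̄ᵀ S⁻¹ C̄ − Λᵀ F̄ − F̄ᵀ Λ and assume Ψ is negative definite. Let X* = −F̄⁻¹ ε (the unique solution of F̄ X + ε = 0), and set h = (F̄ᵀ)⁻¹ (Ψ X* − C̄ᵀ S⁻¹ b − Λᵀ ε). Then the concave quadratic function J_λ(X) = (b − C̄ X)ᵀ S⁻¹ (b − C̄ X) − 2 (Λ X + h)ᵀ (F̄ X + ε) attains its supremum over X ∈ ℝ^N at X = X*, and sup_{X ∈ ℝ^N} J_λ(X)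 = (b − C̄ X*)ᵀ S⁻¹ (b − C̄ X*). In other words, with this choice of multiplier offset h, the Lagrangian relaxation is tight: its value equals the simulation error of the current model. -/
/-!
Expanding `J` around a point `X₀` gives
`J(X₀ + d) = J(X₀) - 2 dᵀ g(X₀) + dᵀ Ψ d`. The offset `h` is chosen exactly so that the
gradient term `g` vanishes at `X*`, which also satisfies the constraint `F̄ X* + ε = 0`;
hence `J(X) - J(X*) = (X - X*)ᵀ Ψ (X - X*) ≤ 0`, and at `X*` the multiplier term drops out.
-/

open Matrix

theorem Matrix.PosDef.isSymm {m : Type*} {S : Matrix m m ℝ} (hS : S.PosDef) : S.IsSymm :=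
  (conjTranspose_eq_transpose_of_trivial S).symm.trans hS.isHermitian.eq

section LagrangianRelaxation

variable {R m n : Type*} [CommRing R] [Fintype m] [Fintype n]

theorem Matrix.IsSymm.dotProduct_mulVec_comm {S : Matrix m m R} (hS : S.IsSymm) (u v : m → R) :
    u ⬝ᵥ (S *ᵥ v) = v ⬝ᵥ (S *ᵥ u) := by
  simpa only [hS.eq] using dotProduct_transpose_mulVec S u v

/-- The paper's `J_λ` with multiplier `λ = 2 (L X + h)`; the weight `S` stands for `Σ_Y⁻¹`. -/
def lagrangianRelaxation (S : Matrix m m R) (C : Matrix m n R) (L F : Matrix n n R)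
    (b : m → R) (h ε X : n → R) : R :=
  (b - C *ᵥ X) ⬝ᵥ (S *ᵥ (b - C *ᵥ X)) - 2 * ((L *ᵥ X + h) ⬝ᵥ (F *ᵥ X + ε))

theorem lagrangianRelaxation_add {S : Matrix m m R} (hS : S.IsSymm) (C : Matrix m n R)
    (L F : Matrix n n R) (b : m → R) (h ε X d : n → R) :
    lagrangianRelaxation S C L F b h ε (X + d) = lagrangianRelaxation S C L F b h ε X
      - 2 * (d ⬝ᵥ (Cᵀ *ᵥ (S *ᵥ (b - C *ᵥ X)) + Lᵀ *ᵥ (F *ᵥ X + ε) + Fᵀ *ᵥ (L *ᵥ X + h)))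
      + d ⬝ᵥ ((Cᵀ * S * C - Lᵀ * F - Fᵀ * L) *ᵥ d) := by
  have hu : b - C *ᵥ (X + d) = (b - C *ᵥ X) - C *ᵥ d := by rw [mulVec_add]; abel
  have hv : L *ᵥ (X + d) + h = (L *ᵥ X + h) + L *ᵥ d := by rw [mulVec_add]; abel
  have hw : F *ᵥ (X + d) + ε = (F *ᵥ X + ε) + F *ᵥ d := by rw [mulVec_add]; abel
  unfold lagrangianRelaxation
  generalize b - C *ᵥ X = u, L *ᵥ X + h = v, F *ᵥ X + ε = w at *
  simp only [hu, hv, hw, mulVec_sub, sub_mulVec, ← mulVec_mulVec, dotProduct_add, add_dotProduct,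
    dotProduct_sub, sub_dotProduct, dotProduct_transpose_mulVec]
  rw [hS.dotProduct_mulVec_comm u (C *ᵥ d), dotProduct_comm (S *ᵥ u),
    dotProduct_comm (S *ᵥ (C *ᵥ d)), dotProduct_comm w, dotProduct_comm (F *ᵥ d)]
  ring

theorem lagrangianRelaxation_of_feasible (S : Matrix m m R) (C : Matrix m n R)
    (L F : Matrix n n R) (b : m → R) (h ε : n → R) {X : n → R} (hX : F *ᵥ X + ε = 0) :
    lagrangianRelaxation S C L F b h ε X = (b - C *ᵥ X) ⬝ᵥ (S *ᵥ (b - C *ᵥ X)) := by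
  simp [lagrangianRelaxation, hX]

end LagrangianRelaxation

theorem lagrangianRelaxation_le_of_stationary {m n : Type*} [Fintype m] [Fintype n]
    {S : Matrix m m ℝ} (hS : S.IsSymm) {C : Matrix m n ℝ} {L F : Matrix n n ℝ}
    (hΨ : (-(Cᵀ * S * C - Lᵀ * F - Fᵀ * L)).PosSemidef)
    {b : m → ℝ} {h ε X₀ : n → ℝ} (hfeas : F *ᵥ X₀ + ε = 0)
    (hstat : Fᵀ *ᵥ (L *ᵥ X₀ + h) = -(Cᵀ *ᵥ (S *ᵥ (b - C *ᵥ X₀)))) (X : n → ℝ) :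
    lagrangianRelaxation S C L F b h ε X ≤ lagrangianRelaxation S C L F b h ε X₀ := by
  have hexp := lagrangianRelaxation_add hS C L F b h ε X₀ (X - X₀)
  rw [add_sub_cancel, hfeas, hstat, mulVec_zero, add_zero, add_neg_cancel, dotProduct_zero,
    mul_zero, sub_zero] at hexp
  have hconcave := hΨ.dotProduct_mulVec_nonneg (X - X₀)
  rw [neg_mulVec, dotProduct_neg, star_trivial] at hconcave
  linarith

theorem lagrangian_relaxation_tightness_general
    {N M : ℕ}
    (Fbar : Matrix (Fin N) (Fin N) ℝ) (hFbar : IsUnit Fbar)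
    (Cbar : Matrix (Fin M) (Fin N) ℝ)
    (S : Matrix (Fin M) (Fin M) ℝ) (hS : S.PosDef)
    (Lam : Matrix (Fin N) (Fin N) ℝ) (ε : Fin N → ℝ) (b : Fin M → ℝ)
    (Psi : Matrix (Fin N) (Fin N) ℝ)
    (hPsi : Psi = Cbarᵀ * S⁻¹ * Cbar - Lamᵀ * Fbar - Fbarᵀ * Lam)
    (hPsiNegDef : (-Psi).PosDef)
    (Xstar : Fin N → ℝ) (hXstar : Xstar = -(Fbar⁻¹ *ᵥ ε))
    (h : Fin N → ℝ)
    (hh : h = (Fbarᵀ)⁻¹ *ᵥ (Psi *ᵥ Xstar - Cbarᵀ *ᵥ (S⁻¹ *ᵥ b) - Lamᵀ *ᵥ ε)) :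
    (∀ X : Fin N → ℝ,
      (b - Cbar *ᵥ X) ⬝ᵥ (S⁻¹ *ᵥ (b - Cbar *ᵥ X))
          - 2 * ((Lam *ᵥ X + h) ⬝ᵥ (Fbar *ᵥ X + ε)) ≤
        (b - Cbar *ᵥ Xstar) ⬝ᵥ (S⁻¹ *ᵥ (b - Cbar *ᵥ Xstar))
          - 2 * ((Lam *ᵥ Xstar + h) ⬝ᵥ (Fbar *ᵥ Xstar + ε))) ∧
    ((b - Cbar *ᵥ Xstar) ⬝ᵥ (S⁻¹ *ᵥ (b - Cbar *ᵥ Xstar))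
          - 2 * ((Lam *ᵥ Xstar + h) ⬝ᵥ (Fbar *ᵥ Xstar + ε)) =
        (b - Cbar *ᵥ Xstar) ⬝ᵥ (S⁻¹ *ᵥ (b - Cbar *ᵥ Xstar))) := by
  have hdet : IsUnit Fbar.det := (isUnit_iff_isUnit_det Fbar).mp hFbar
  have hfeas : Fbar *ᵥ Xstar + ε = 0 := by
    rw [hXstar, mulVec_neg, mulVec_mulVec, mul_nonsing_inv _ hdet, one_mulVec, neg_add_cancel]
  have hFh : Fbarᵀ *ᵥ h = Psi *ᵥ Xstar - Cbarᵀ *ᵥ (S⁻¹ *ᵥ b) - Lamᵀ *ᵥ ε := by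
    rw [hh, mulVec_mulVec, mul_nonsing_inv _ (by rwa [det_transpose]), one_mulVec]
  have hε : ε = -(Fbar *ᵥ Xstar) := eq_neg_of_add_eq_zero_right hfeas
  have hstat : Fbarᵀ *ᵥ (Lam *ᵥ Xstar + h) = -(Cbarᵀ *ᵥ (S⁻¹ *ᵥ (b - Cbar *ᵥ Xstar))) := by
    rw [mulVec_add, hFh, hPsi, hε]
    simp only [sub_mulVec, ← mulVec_mulVec, mulVec_sub, mulVec_neg]
    abel
  exact ⟨lagrangianRelaxation_le_of_stationary hS.isSymm.inv (hPsi ▸ hPsiNegDef.posSemidef)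
    hfeas hstat, lagrangianRelaxation_of_feasible _ _ _ _ _ _ _ hfeas⟩

/-- Tightness of the Lagrangian relaxation with the multiplier offset
`h = (F̄ᵀ)⁻¹(Ψ X* − C̄ᵀS⁻¹b − Λᵀε)`: the concave quadratic
`J_λ(X) = (b − C̄X)ᵀS⁻¹(b − C̄X) − 2(ΛX + h)ᵀ(F̄X + ε)` attains its supremum at
`X* = −F̄⁻¹ε` (the unique solution of `F̄X + ε = 0`), where its value is the
simulation error `(b − C̄X*)ᵀS⁻¹(b − C̄X*)`. -/
theorem lagrangian_relaxation_tightness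
    {N M : ℕ} (hN : 1 ≤ N) (hM : 1 ≤ M)
    (Fbar : Matrix (Fin N) (Fin N) ℝ) (hFbar : IsUnit Fbar)
    (Cbar : Matrix (Fin M) (Fin N) ℝ)
    (S : Matrix (Fin M) (Fin M) ℝ) (hS : S.PosDef)
    (Lam : Matrix (Fin N) (Fin N) ℝ) (ε : Fin N → ℝ) (b : Fin M → ℝ)
    (Psi : Matrix (Fin N) (Fin N) ℝ)
    (hPsi : Psi = Cbarᵀ * S⁻¹ * Cbar - Lamᵀ * Fbar - Fbarᵀ * Lam)
    (hPsiNegDef : (-Psi).PosDef)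
    (Xstar : Fin N → ℝ) (hXstar : Xstar = -(Fbar⁻¹ *ᵥ ε))
    (h : Fin N → ℝ)
    (hh : h = (Fbarᵀ)⁻¹ *ᵥ (Psi *ᵥ Xstar - Cbarᵀ *ᵥ (S⁻¹ *ᵥ b) - Lamᵀ *ᵥ ε)) :
    (∀ X : Fin N → ℝ,
      (b - Cbar *ᵥ X) ⬝ᵥ (S⁻¹ *ᵥ (b - Cbar *ᵥ X))
          - 2 * ((Lam *ᵥ X + h) ⬝ᵥ (Fbar *ᵥ X + ε)) ≤
        (b - Cbar *ᵥ Xstar) ⬝ᵥ (S⁻¹ *ᵥ (b - Cbar *ᵥ Xstar))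
          - 2 * ((Lam *ᵥ Xstar + h) ⬝ᵥ (Fbar *ᵥ Xstar + ε))) ∧
    ((b - Cbar *ᵥ Xstar) ⬝ᵥ (S⁻¹ *ᵥ (b - Cbar *ᵥ Xstar))
          - 2 * ((Lam *ᵥ Xstar + h) ⬝ᵥ (Fbar *ᵥ Xstar + ε)) =
        (b - Cbar *ᵥ Xstar) ⬝ᵥ (S⁻¹ *ᵥ (b - Cbar *ᵥ Xstar))) :=
  lagrangian_relaxation_tightness_general Fbar hFbar Cbar S hS Lam ε b Psi hPsi hPsiNegDef Xstar
    hXstar h hh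
end

section
/- Let n, m ≥ 1, let E, F, H, P be real n×n matrices with P symmetric, let C be a real m×n matrix and Σ_v a real symmetric m×m matrix. Suppose the block matrix M = [[HᵀE + EᵀH − P, FᵀH, Cᵀ], [HᵀF, P, 0], [C, 0, Σ_v]] is positive definite. Then E is invertible and the matrix A = E⁻¹ F is Schur stable: every eigenvalue λ ∈ ℂ of A (i.e. every element of the spectrum of A regarded as a complex matrix) satisfies |λ| < 1. (This is the 'only if' direction of the statement that the set Θ(H) = {η : M(η, H) > 0} parametrizes stable linear models.) -/
/-!
Write `K = HᵀE + EᵀH − P`; positivity of `M` makes the block `[[K, FᵀH], [HᵀF, P]]` positive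
definite, hence also `K` and `P`. If `Ew = 0` with `w ≠ 0`, then `w*Kw = −w*Pw`, which cannot
be positive, so `E` is invertible. If `Aw = zw` with `w ≠ 0`, then `Fw = zEw`, and at the test
vector `(w, −zw)` the quadratic form of the block equals `(1 − |z|²) w*Kw`; as both this and
`w*Kw` are positive, `|z| < 1`.
-/

open Matrix
open scoped ComplexOrder MatrixOrder

namespace Matrix

section Blocks

variable {ι κ R : Type*} [CommRing R] [PartialOrder R] [StarRing R]
  {A : Matrix ι ι R} {B : Matrix ι κ R} {C : Matrix κ ι R} {D : Matrix κ κ R}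

lemma PosDef.of_fromBlocks₁₁ (h : (fromBlocks A B C D).PosDef) : A.PosDef :=
  h.submatrix Sum.inl_injective

lemma PosDef.of_fromBlocks₂₂ (h : (fromBlocks A B C D).PosDef) : D.PosDef :=
  h.submatrix Sum.inr_injective

end Blocks

section RCLike

variable {ι 𝕜 : Type*} [Fintype ι] [RCLike 𝕜]

lemma PosDef.map_ofReal [DecidableEq ι] {A : Matrix ι ι ℝ} (hA : A.PosDef) :
    (A.map ((↑) : ℝ → 𝕜)).PosDef := by
  obtain ⟨B, rfl⟩ := CStarAlgebra.nonneg_iff_eq_star_mul_self.mp hA.posSemidef.nonneg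
  refine (PosSemidef.posDef_iff_isUnit ?_).mpr (hA.isUnit.map (algebraMap ℝ 𝕜).mapMatrix)
  have hmap : (star B * B).map ((↑) : ℝ → 𝕜) = (B.map (↑))ᴴ * B.map (↑) := by
    ext i j
    simp [mul_apply]
  rw [hmap]
  exact posSemidef_conjTranspose_mul_self _

lemma exists_mulVec_eq_smul_of_mem_spectrum [DecidableEq ι] {A : Matrix ι ι 𝕜} {z : 𝕜}
    (hz : z ∈ spectrum 𝕜 A) : ∃ w ≠ 0, A *ᵥ w = z • w := by
  rw [← spectrum_toLin', ← Module.End.hasEigenvalue_iff_mem_spectrum] at hz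
  obtain ⟨w, hw⟩ := hz.exists_hasEigenvector
  exact ⟨w, hw.2, by simpa using hw.apply_eq_smul⟩

end RCLike

section StabilityBlock

variable {ι R : Type*} [Fintype ι] [CommRing R] [StarRing R]

lemma star_dotProduct_conjTranspose_mulVec (A : Matrix ι ι R) (v x : ι → R) :
    star v ⬝ᵥ Aᴴ *ᵥ x = star (A *ᵥ v) ⬝ᵥ x := by
  rw [star_mulVec, dotProduct_mulVec]

/-- The upper-left `2 × 2` block of the LMI matrix `M(η, H)`; over `ℝ`, `ᴴ` is `ᵀ`. -/
def stabilityBlock (E F H P : Matrix ι ι R) : Matrix (ι ⊕ ι) (ι ⊕ ι) R :=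
  fromBlocks (Hᴴ * E + Eᴴ * H - P) (Fᴴ * H) (Hᴴ * F) P

lemma star_dotProduct_stabilityBlock_mulVec {E F H P : Matrix ι ι R} {w : ι → R} {z : R}
    (hw : F *ᵥ w = z • E *ᵥ w) :
    star (Sum.elim w (-(z • w))) ⬝ᵥ stabilityBlock E F H P *ᵥ Sum.elim w (-(z • w)) =
      (1 - star z * z) * (star w ⬝ᵥ (Hᴴ * E + Eᴴ * H - P) *ᵥ w) := by
  simp only [stabilityBlock, Function.star_sumElim, fromBlocks_mulVec, sumElim_dotProduct_sumElim,
    Sum.elim_comp_inl, Sum.elim_comp_inr, ← mulVec_mulVec, sub_mulVec, add_mulVec, dotProduct_add,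
    dotProduct_sub, mulVec_neg, mulVec_smul, dotProduct_neg, dotProduct_smul, star_neg, star_smul,
    neg_dotProduct, smul_dotProduct, star_dotProduct_conjTranspose_mulVec, hw, smul_eq_mul]
  ring

lemma map_ofReal_stabilityBlock {𝕜 : Type*} [RCLike 𝕜] (E F H P : Matrix ι ι ℝ) :
    (stabilityBlock E F H P).map ((↑) : ℝ → 𝕜) =
      stabilityBlock (E.map (↑)) (F.map (↑)) (H.map (↑)) (P.map (↑)) := by
  ext (i | i) (j | j) <;> simp [stabilityBlock, mul_apply]

end StabilityBlock

section PosDefStabilityBlock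

variable {ι 𝕜 : Type*} [Fintype ι] [RCLike 𝕜] {E F H P : Matrix ι ι 𝕜}

lemma isUnit_of_posDef_stabilityBlock [DecidableEq ι] (hQ : (stabilityBlock E F H P).PosDef) :
    IsUnit E := by
  refine mulVec_injective_iff_isUnit.mp <|
    (injective_iff_map_eq_zero E.mulVecLin).mpr fun v hEv => ?_
  rw [mulVecLin_apply] at hEv
  by_contra hv
  have hK := hQ.of_fromBlocks₁₁.dotProduct_mulVec_pos hv
  have hP := hQ.of_fromBlocks₂₂.dotProduct_mulVec_pos hv
  have hKv : star v ⬝ᵥ (Hᴴ * E + Eᴴ * H - P) *ᵥ v = -(star v ⬝ᵥ P *ᵥ v) := by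
    simp [sub_mulVec, add_mulVec, ← mulVec_mulVec, hEv, star_dotProduct_conjTranspose_mulVec]
  rw [hKv, neg_pos] at hK
  exact lt_asymm hK hP

lemma norm_lt_one_of_posDef_stabilityBlock (hQ : (stabilityBlock E F H P).PosDef) {w : ι → 𝕜}
    {z : 𝕜} (hw0 : w ≠ 0) (hw : F *ᵥ w = z • E *ᵥ w) : ‖z‖ < 1 := by
  have hu : Sum.elim w (-(z • w)) ≠ 0 := fun h => hw0 (funext fun i => congrFun h (Sum.inl i))
  have hQu := hQ.dotProduct_mulVec_pos hu
  obtain ⟨c, hc, hKc⟩ :=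
    RCLike.pos_iff_exists_ofReal.mp (hQ.of_fromBlocks₁₁.dotProduct_mulVec_pos hw0)
  rw [star_dotProduct_stabilityBlock_mulVec hw, ← hKc, RCLike.star_def, RCLike.conj_mul] at hQu
  norm_cast at hQu
  have hz : 0 < 1 - ‖z‖ ^ 2 := pos_of_mul_pos_left hQu hc.le
  exact (sq_lt_one_iff₀ (norm_nonneg z)).mp (by linarith)

end PosDefStabilityBlock

end Matrix

theorem stability_lmi_implies_schur_stable_general
    {n m : ℕ}
    (E F H P : Matrix (Fin n) (Fin n) ℝ)
    (C : Matrix (Fin m) (Fin n) ℝ) (Sv : Matrix (Fin m) (Fin m) ℝ)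
    (hM : (Matrix.fromBlocks
        (Matrix.fromBlocks (Hᵀ * E + Eᵀ * H - P) (Fᵀ * H) (Hᵀ * F) P)
        (Matrix.fromRows Cᵀ 0)
        (Matrix.fromCols C 0)
        Sv).PosDef) :
    IsUnit E ∧
    ∀ z ∈ spectrum ℂ ((E⁻¹ * F).map (Complex.ofReal)), ‖z‖ < 1 := by
  have hQ : (stabilityBlock E F H P).PosDef := by
    simpa only [stabilityBlock, conjTranspose_eq_transpose_of_trivial] using hM.of_fromBlocks₁₁
  have hE : IsUnit E := isUnit_of_posDef_stabilityBlock hQ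
  refine ⟨hE, fun z hz => ?_⟩
  obtain ⟨w, hw0, hw⟩ := exists_mulVec_eq_smul_of_mem_spectrum hz
  have hQℂ := hQ.map_ofReal (𝕜 := ℂ)
  rw [map_ofReal_stabilityBlock] at hQℂ
  have hF : F.map Complex.ofReal = E.map Complex.ofReal * (E⁻¹ * F).map Complex.ofReal :=
    calc F.map Complex.ofReal
        = (E * (E⁻¹ * F)).map Complex.ofReal := by
          rw [mul_nonsing_inv_cancel_left _ _ ((isUnit_iff_isUnit_det E).mp hE)]
      _ = E.map Complex.ofReal * (E⁻¹ * F).map Complex.ofReal :=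
          Matrix.map_mul (f := Complex.ofRealHom)
  refine norm_lt_one_of_posDef_stabilityBlock (E := E.map Complex.ofReal)
    (F := F.map Complex.ofReal) hQℂ hw0 ?_
  rw [hF, ← mulVec_mulVec, hw, mulVec_smul]

/-- 'Only if' direction of the stable-model parametrization: if the LMI
`M = [[HᵀE + EᵀH − P, FᵀH, Cᵀ], [HᵀF, P, 0], [C, 0, Σ_v]] > 0` holds, then `E` is
invertible and `A = E⁻¹F` is Schur stable, i.e. every (complex) eigenvalue `λ` of `A`
satisfies `|λ| < 1`. -/
theorem stability_lmi_implies_schur_stable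
    {n m : ℕ} (hn : 1 ≤ n) (hm : 1 ≤ m)
    (E F H P : Matrix (Fin n) (Fin n) ℝ)
    (C : Matrix (Fin m) (Fin n) ℝ) (Sv : Matrix (Fin m) (Fin m) ℝ)
    (hM : (Matrix.fromBlocks
        (Matrix.fromBlocks (Hᵀ * E + Eᵀ * H - P) (Fᵀ * H) (Hᵀ * F) P)
        (Matrix.fromRows Cᵀ 0)
        (Matrix.fromCols C 0)
        Sv).PosDef) :
    IsUnit E ∧
    ∀ z ∈ spectrum ℂ ((E⁻¹ * F).map (Complex.ofReal)), ‖z‖ < 1 :=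
  stability_lmi_implies_schur_stable_general E F H P C Sv hM
end
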